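/- Let L be a Leibniz algebra, I the ideal spanned by {[ab]+[ba] : a,b ∈ L}, and L̄ = L/I the quotient Lie algebra, writing ū = u + I. On L̂ = L̄ ⊕ L define [u,v] = 0 for u,v ∈ L, [ū,v] = [uv], [u,v̄] = −[vu], and [ū,v̄] = [uv]‾. Then L̂ with this bracket is a Lie algebra. -/

import Mathlib

/-! Modulo `I`, every bracket `[ab]` is antisymmetric, so the Leibniz identity on `L̄` becomes the
Jacobi identity, and the same identity read with `L̄` acting on `L` says that `ū ↦ [u, -]` is a
representation of `L̄`. The bracket on `L̂` is then the semidirect product of the Lie algebra `L̄`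
with the abelian `L̄`-module `L`, and antisymmetry and Jacobi follow componentwise. -/

variable {k L : Type*} [Field k] [AddCommGroup L] [Module k L]

/-- The subspace of a Leibniz algebra `L` spanned by all elements `[ab] + [ba]`. -/
def leibSpan (br : L →ₗ[k] L →ₗ[k] L) : Submodule k L :=
  Submodule.span k {x | ∃ a b : L, x = br a b + br b a}

/-- The bracket on `L̂ = L̄ ⊕ L` (with `L̄ = L/I`): for `p = (x₁, u₁)`, `q = (x₂, u₂)`,
`[p, q] = ([x₁, x₂], x₁ · u₂ − x₂ · u₁)`, which encodes `[u,v] = 0`, `[ū,v] = [uv]`,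
`[u,v̄] = −[vu]`, `[ū,v̄] = [uv]‾`. -/
def hatBracket (br : L →ₗ[k] L →ₗ[k] L)
    (qbr : (L ⧸ leibSpan br) →ₗ[k] (L ⧸ leibSpan br) →ₗ[k] (L ⧸ leibSpan br))
    (act : (L ⧸ leibSpan br) →ₗ[k] L →ₗ[k] L)
    (p q : (L ⧸ leibSpan br) × L) : (L ⧸ leibSpan br) × L :=
  (qbr p.1 q.1, act p.1 q.2 - act q.1 p.2)

open Submodule.Quotient

section QuotientBracket

variable (br : L →ₗ[k] L →ₗ[k] L)
  (qbr : (L ⧸ leibSpan br) →ₗ[k] (L ⧸ leibSpan br) →ₗ[k] (L ⧸ leibSpan br))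

theorem quotient_bracket_anticomm
    (hqbr : ∀ a b : L, qbr (mk a) (mk b) = mk (br a b)) (x y : L ⧸ leibSpan br) :
    qbr x y = -qbr y x := by
  obtain ⟨a, rfl⟩ := mk_surjective _ x
  obtain ⟨b, rfl⟩ := mk_surjective _ y
  rw [hqbr, hqbr, eq_neg_iff_add_eq_zero, ← mk_add, mk_eq_zero]
  exact Submodule.subset_span ⟨a, b, rfl⟩

theorem quotient_bracket_leibniz
    (leib : ∀ x y z : L, br x (br y z) - br y (br x z) = br (br x y) z)
    (hqbr : ∀ a b : L, qbr (mk a) (mk b) = mk (br a b)) (x y z : L ⧸ leibSpan br) :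
    qbr x (qbr y z) - qbr y (qbr x z) = qbr (qbr x y) z := by
  obtain ⟨a, rfl⟩ := mk_surjective _ x
  obtain ⟨b, rfl⟩ := mk_surjective _ y
  obtain ⟨c, rfl⟩ := mk_surjective _ z
  simp only [hqbr, ← mk_sub, leib]

theorem quotient_act_bracket (act : (L ⧸ leibSpan br) →ₗ[k] L →ₗ[k] L)
    (leib : ∀ x y z : L, br x (br y z) - br y (br x z) = br (br x y) z)
    (hqbr : ∀ a b : L, qbr (mk a) (mk b) = mk (br a b))
    (hact : ∀ u v : L, act (mk u) v = br u v) (x y : L ⧸ leibSpan br) (v : L) :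
    act (qbr x y) v = act x (act y v) - act y (act x v) := by
  obtain ⟨a, rfl⟩ := mk_surjective _ x
  obtain ⟨b, rfl⟩ := mk_surjective _ y
  simp only [hqbr, hact, leib]

end QuotientBracket

section SemidirectBracket

variable {br : L →ₗ[k] L →ₗ[k] L}
  {qbr : (L ⧸ leibSpan br) →ₗ[k] (L ⧸ leibSpan br) →ₗ[k] (L ⧸ leibSpan br)}
  {act : (L ⧸ leibSpan br) →ₗ[k] L →ₗ[k] L}

theorem hatBracket_anticomm (hanti : ∀ x y, qbr x y = -qbr y x) (p q : (L ⧸ leibSpan br) × L) :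
    hatBracket br qbr act p q = -hatBracket br qbr act q p := by
  simp only [hatBracket, Prod.neg_mk, hanti p.1 q.1, neg_sub]

theorem hatBracket_jacobi (hanti : ∀ x y, qbr x y = -qbr y x)
    (hleib : ∀ x y z, qbr x (qbr y z) - qbr y (qbr x z) = qbr (qbr x y) z)
    (hrep : ∀ x y v, act (qbr x y) v = act x (act y v) - act y (act x v))
    (p q r : (L ⧸ leibSpan br) × L) :
    hatBracket br qbr act (hatBracket br qbr act p q) r
      + hatBracket br qbr act (hatBracket br qbr act q r) p
      + hatBracket br qbr act (hatBracket br qbr act r p) q = 0 := by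
  obtain ⟨x, u⟩ := p
  obtain ⟨y, v⟩ := q
  obtain ⟨z, w⟩ := r
  simp only [hatBracket, Prod.mk_add_mk, Prod.mk_eq_zero, map_sub, hrep]
  refine ⟨?_, by abel⟩
  rw [hanti (qbr y z), hanti (qbr z x), hanti z x, map_neg, ← hleib]
  abel

end SemidirectBracket

/-- Let `L` be a Leibniz algebra, `I` the ideal spanned by `{[ab]+[ba]}`, `L̄ = L/I` the
quotient Lie algebra with induced bracket `qbr`, and let `act` be the induced action
`[ū, v] = [uv]` of `L̄` on `L`. Then `L̂ = L̄ ⊕ L` with the bracket `hatBracket` is a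
Lie algebra: the bracket is antisymmetric and satisfies the Jacobi identity. -/
theorem stmt_9 (br : L →ₗ[k] L →ₗ[k] L)
    (leib : ∀ x y z : L, br x (br y z) - br y (br x z) = br (br x y) z)
    (qbr : (L ⧸ leibSpan br) →ₗ[k] (L ⧸ leibSpan br) →ₗ[k] (L ⧸ leibSpan br))
    (hqbr : ∀ a b : L, qbr (Submodule.Quotient.mk a) (Submodule.Quotient.mk b)
      = Submodule.Quotient.mk (br a b))
    (act : (L ⧸ leibSpan br) →ₗ[k] L →ₗ[k] L)
    (hact : ∀ u v : L, act (Submodule.Quotient.mk u) v = br u v) :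
    (∀ p q : (L ⧸ leibSpan br) × L,
      hatBracket br qbr act p q = - hatBracket br qbr act q p) ∧
    (∀ p q r : (L ⧸ leibSpan br) × L,
      hatBracket br qbr act (hatBracket br qbr act p q) r
        + hatBracket br qbr act (hatBracket br qbr act q r) p
        + hatBracket br qbr act (hatBracket br qbr act r p) q = 0) := by
  have hanti := quotient_bracket_anticomm br qbr hqbr
  exact ⟨hatBracket_anticomm hanti,
    hatBracket_jacobi hanti (quotient_bracket_leibniz br qbr leib hqbr)
      (quotient_act_bracket br qbr act leib hqbr hact)⟩
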